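/- arXiv:2204.00275 — 7 statements merged into one kernel-verified Lean document; each statement's English description precedes it below -/
import Mathlib

section
/- Let H be a real Hilbert space and let T₁ and T₂ be two strongly nonexpansive operators on H such that Fix(T₁) ∩ Fix(T₂) ≠ ∅. Let h : ℕ → {1,2} be a mapping such that h⁻¹({i}) is an infinite set for each i = 1, 2. Then for every x ∈ H, the sequence (P_n x)_{n=0}^∞, where P_n := T_{h(n)}∘⋯∘T_{h(0)} is the unrestricted product of {T_i}_{i=1}^2 determined by h, converges weakly to a common fixed point of T₁ and T₂. -/
/-!
The orbit `u n` of `x` is Fejér monotone with respect to the common fixed points, and Condition (S),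
applied against a common fixed point `z` (where `‖u n - z‖ - ‖u (n+1) - z‖ → 0`), makes the steps
`u n - u (n+1)` tend to zero. Right after the end of each maximal block on which `h` is constant,
the iterate is almost fixed by both operators, so weak cluster points of these switch points are
common fixed points by demiclosedness. A weak cluster point `q` of the orbit along indices where
`T i` acts is fixed by `T i`, and `‖u - q‖` does not increase along the rest of the block; comparing
with the switch points via Opial's identity `lim ‖u n - q‖² = lim ‖u n - w‖² + ‖w - q‖²`
(for `u n ⇀ w`) shows that `q` is a common fixed point too. Opial's argument then yields weak
convergence. Cluster points are taken along ultrafilters, where bounded sequences have weak limits.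
-/

open Filter Topology RealInnerProductSpace

variable {H : Type*} [NormedAddCommGroup H] [InnerProductSpace ℝ H] [CompleteSpace H]

def WeakConvergesTo (x : ℕ → H) (p : H) : Prop :=
  ∀ y : H, Tendsto (fun n => ⟪x n, y⟫) atTop (𝓝 ⟪p, y⟫)

/-- `compSeq n g = g (n-1) ∘ ⋯ ∘ g 0` (the identity when `n = 0`). -/
def compSeq {α : Type*} : ℕ → (ℕ → α → α) → (α → α)
  | 0, _ => id
  | n + 1, g => g n ∘ compSeq n g

def IsProjOn (C : Set H) (P : H → H) : Prop :=
  ∀ x, P x ∈ C ∧ ∀ y ∈ C, ‖x - P x‖ ≤ ‖x - y‖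

def Nonexpansive (T : H → H) : Prop := ∀ x y, ‖T x - T y‖ ≤ ‖x - y‖

def CondS (T : H → H) : Prop :=
  ∀ x y : ℕ → H, (∃ c, ∀ n, ‖x n - y n‖ ≤ c) →
    Tendsto (fun n => ‖x n - y n‖ - ‖T (x n) - T (y n)‖) atTop (𝓝 0) →
    Tendsto (fun n => x n - y n - (T (x n) - T (y n))) atTop (𝓝 (0 : H))

def StronglyNonexpansive (T : H → H) : Prop := Nonexpansive T ∧ CondS T

def FirmlyNonexpansive (T : H → H) : Prop :=
  ∀ x y, ‖T x - T y‖ ^ 2 ≤ ⟪T x - T y, x - y⟫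

def Averaged (T : H → H) : Prop :=
  ∃ lam ∈ Set.Ioo (0 : ℝ) 1, ∃ U : H → H, Nonexpansive U ∧
    T = fun x => (1 - lam) • x + lam • U x

/-- The unrestricted `r`-set Douglas–Rachford operators `S n` associated with projections
`proj i` onto the sets `C i`, indices chosen by `f`: `S n = 2⁻¹ (Id + R_{C_{f((r-1)n+r-1)}} ∘ ⋯ ∘ R_{C_{f((r-1)n)}})`. -/
noncomputable def drS (proj : ℕ → H → H) (r : ℕ) (f : ℕ → ℕ) (n : ℕ) : H → H :=
  fun x => (2⁻¹ : ℝ) • (x + compSeq r (fun j y => (2 : ℝ) • proj (f ((r - 1) * n + j)) y - y) x)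

theorem Ultrafilter.exists_tendsto_of_abs_le {f : ℕ → ℝ} {M : ℝ} (hf : ∀ n, |f n| ≤ M)
    (𝒰 : Ultrafilter ℕ) : ∃ a, |a| ≤ M ∧ Tendsto f 𝒰 (𝓝 a) := by
  have hle : ↑(𝒰.map f) ≤ 𝓟 (Set.Icc (-M) M) := by
    rw [le_principal_iff, Ultrafilter.coe_map, Filter.mem_map]
    exact univ_mem' fun n => abs_le.mp (hf n)
  obtain ⟨a, ha, hlim⟩ := isCompact_Icc.ultrafilter_le_nhds _ hle
  exact ⟨a, abs_le.mpr ha, hlim⟩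

section WeakLimits

variable {E : Type*} [NormedAddCommGroup E] [InnerProductSpace ℝ E]

def WeakTendsto (u : ℕ → E) (l : Filter ℕ) (p : E) : Prop :=
  ∀ y : E, Tendsto (fun n => ⟪u n, y⟫) l (𝓝 ⟪p, y⟫)

theorem WeakTendsto.tendsto_inner_sub {u : ℕ → E} {l : Filter ℕ} {p : E} (hu : WeakTendsto u l p)
    (b y : E) : Tendsto (fun n => ⟪u n - b, y⟫) l (𝓝 ⟪p - b, y⟫) := by
  simpa only [inner_sub_left] using (hu y).sub_const ⟪b, y⟫

theorem WeakTendsto.tendsto_norm_sub_sq {u : ℕ → E} {l : Filter ℕ} {p b : E} {c : ℝ}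
    (hu : WeakTendsto u l p) (hb : Tendsto (fun n => ‖u n - b‖) l (𝓝 c)) (e : E) :
    Tendsto (fun n => ‖u n - e‖ ^ 2) l (𝓝 (c ^ 2 + 2 * ⟪p - b, b - e⟫ + ‖b - e‖ ^ 2)) := by
  have hsplit : ∀ n, ‖u n - e‖ ^ 2 = ‖u n - b‖ ^ 2 + 2 * ⟪u n - b, b - e⟫ + ‖b - e‖ ^ 2 := by
    intro n
    rw [← norm_add_sq_real, sub_add_sub_cancel]
  simp only [hsplit]
  exact ((hb.pow 2).add ((hu.tendsto_inner_sub b (b - e)).const_mul 2)).add tendsto_const_nhds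

theorem WeakTendsto.sq_eq_sq_add_norm_sub_sq {u : ℕ → E} {l : Filter ℕ} [l.NeBot] {p q : E}
    {a b : ℝ} (hu : WeakTendsto u l p) (ha : Tendsto (fun n => ‖u n - p‖) l (𝓝 a))
    (hb : Tendsto (fun n => ‖u n - q‖) l (𝓝 b)) : b ^ 2 = a ^ 2 + ‖p - q‖ ^ 2 := by
  have := tendsto_nhds_unique (hb.pow 2) (hu.tendsto_norm_sub_sq ha q)
  simpa using this

theorem WeakTendsto.eq_of_tendsto_norm_sub {u : ℕ → E} {l l₁ l₂ : Filter ℕ} [l₁.NeBot]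
    [l₂.NeBot] (h₁ : l₁ ≤ l) (h₂ : l₂ ≤ l) {p q : E} {a b : ℝ} (hp : WeakTendsto u l₁ p)
    (hq : WeakTendsto u l₂ q) (ha : Tendsto (fun n => ‖u n - p‖) l (𝓝 a))
    (hb : Tendsto (fun n => ‖u n - q‖) l (𝓝 b)) : p = q := by
  have hpq := hp.sq_eq_sq_add_norm_sub_sq (ha.mono_left h₁) (hb.mono_left h₁)
  have hqp := hq.sq_eq_sq_add_norm_sub_sq (hb.mono_left h₂) (ha.mono_left h₂)
  rw [norm_sub_rev] at hqp
  have : ‖p - q‖ = 0 := by nlinarith [norm_nonneg (p - q)]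
  exact sub_eq_zero.mp (norm_eq_zero.mp this)

theorem WeakTendsto.eq_of_eventually_norm_sub_le {u v : ℕ → E} {l : Filter ℕ} [l.NeBot]
    {q w : E} {c : ℝ} (hu : WeakTendsto u l q) (hv : WeakTendsto v l w)
    (huw : Tendsto (fun n => ‖u n - w‖) l (𝓝 c)) (hvw : Tendsto (fun n => ‖v n - w‖) l (𝓝 c))
    (hle : ∀ᶠ n in l, ‖v n - q‖ ≤ ‖u n - q‖) : q = w := by
  have hlim := le_of_tendsto_of_tendsto (hv.tendsto_norm_sub_sq hvw q)
    (hu.tendsto_norm_sub_sq huw q) (hle.mono fun n hn => pow_le_pow_left₀ (norm_nonneg _) hn 2)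
  have hinner : ⟪q - w, w - q⟫ = -‖w - q‖ ^ 2 := by
    rw [← neg_sub, inner_neg_left, real_inner_self_eq_norm_sq]
  rw [sub_self, inner_zero_left, hinner] at hlim
  have : ‖w - q‖ = 0 := by nlinarith [norm_nonneg (w - q)]
  exact (sub_eq_zero.mp (norm_eq_zero.mp this)).symm

theorem Nonexpansive.apply_eq_of_weakTendsto {T : E → E} (hT : Nonexpansive T) {u : ℕ → E}
    {l : Filter ℕ} [l.NeBot] {q : E} {C : ℝ} (hC : ∀ n, ‖u n‖ ≤ C) (hq : WeakTendsto u l q)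
    (hfix : Tendsto (fun n => ‖u n - T (u n)‖) l (𝓝 0)) : T q = q := by
  set δ := fun n => ‖u n - T (u n)‖
  have key : ∀ n, ‖q - T q‖ ^ 2 ≤ δ n ^ 2 + 2 * δ n * (C + ‖q‖) - 2 * ⟪u n - q, q - T q⟫ := by
    intro n
    have hsplit : ‖u n - T q‖ ^ 2 = ‖u n - q‖ ^ 2 + 2 * ⟪u n - q, q - T q⟫ + ‖q - T q‖ ^ 2 := by
      rw [← norm_add_sq_real, sub_add_sub_cancel]
    have htri : ‖u n - T q‖ ≤ δ n + ‖u n - q‖ :=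
      (norm_sub_le_norm_sub_add_norm_sub _ (T (u n)) _).trans (add_le_add le_rfl (hT _ _))
    have hbound : ‖u n - q‖ ≤ C + ‖q‖ := (norm_sub_le _ _).trans (add_le_add (hC n) le_rfl)
    nlinarith [pow_le_pow_left₀ (norm_nonneg _) htri 2, norm_nonneg (u n - T (u n)),
      mul_le_mul_of_nonneg_left hbound (norm_nonneg (u n - T (u n)))]
  have hrhs : Tendsto (fun n => δ n ^ 2 + 2 * δ n * (C + ‖q‖) - 2 * ⟪u n - q, q - T q⟫) l
      (𝓝 (0 ^ 2 + 2 * 0 * (C + ‖q‖) - 2 * ⟪q - q, q - T q⟫)) :=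
    ((hfix.pow 2).add ((hfix.const_mul 2).mul_const _)).sub
      ((hq.tendsto_inner_sub q (q - T q)).const_mul 2)
  simp only [sub_self, inner_zero_left] at hrhs
  have : ‖q - T q‖ ^ 2 ≤ 0 := ge_of_tendsto (by simpa using hrhs) (Eventually.of_forall key)
  have : ‖q - T q‖ = 0 := by nlinarith [norm_nonneg (q - T q)]
  exact (sub_eq_zero.mp (norm_eq_zero.mp this)).symm

variable [CompleteSpace E]

theorem exists_weakTendsto_of_norm_le {u : ℕ → E} {C : ℝ} (hC : ∀ n, ‖u n‖ ≤ C)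
    (𝒰 : Ultrafilter ℕ) : ∃ p, WeakTendsto u 𝒰 p := by
  have hlim : ∀ y : E, ∃ a, |a| ≤ C * ‖y‖ ∧ Tendsto (fun n => ⟪u n, y⟫) 𝒰 (𝓝 a) := fun y =>
    𝒰.exists_tendsto_of_abs_le (fun n => (abs_real_inner_le_norm _ _).trans
      (mul_le_mul_of_nonneg_right (hC n) (norm_nonneg y)))
  choose φ hφC hφ using hlim
  let L : E →ₗ[ℝ] ℝ :=
    { toFun := φ
      map_add' := fun y z => tendsto_nhds_unique (hφ (y + z)) <| by
        simpa only [inner_add_right] using (hφ y).add (hφ z)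
      map_smul' := fun c y => tendsto_nhds_unique (hφ (c • y)) <| by
        simpa only [real_inner_smul_right, RingHom.id_apply, smul_eq_mul] using (hφ y).const_mul c }
  refine ⟨(InnerProductSpace.toDual ℝ E).symm (L.mkContinuous C hφC), fun y => ?_⟩
  rw [InnerProductSpace.toDual_symm_apply]
  exact hφ y

theorem exists_weakTendsto_of_clusterPt_mem {u : ℕ → E} {F : Set E} {C : ℝ}
    (hC : ∀ n, ‖u n‖ ≤ C) (hF : ∀ w ∈ F, ∃ c, Tendsto (fun n => ‖u n - w‖) atTop (𝓝 c))
    (hcluster : ∀ 𝒰 : Ultrafilter ℕ, (𝒰 : Filter ℕ) ≤ atTop → ∀ q, WeakTendsto u 𝒰 q → q ∈ F) :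
    ∃ p ∈ F, WeakTendsto u atTop p := by
  obtain ⟨p, hp⟩ := exists_weakTendsto_of_norm_le hC (Ultrafilter.of atTop)
  have hpF := hcluster _ (Ultrafilter.of_le _) p hp
  refine ⟨p, hpF, fun y => (tendsto_iff_ultrafilter _ _ _).2 fun 𝒰 h𝒰 => ?_⟩
  obtain ⟨q, hq⟩ := exists_weakTendsto_of_norm_le hC 𝒰
  have hqF := hcluster 𝒰 h𝒰 q hq
  obtain ⟨a, ha⟩ := hF p hpF
  obtain ⟨b, hb⟩ := hF q hqF
  rw [hp.eq_of_tendsto_norm_sub (Ultrafilter.of_le _) h𝒰 hq ha hb]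
  exact hq y

end WeakLimits

theorem forall_apply_of_eq_one_or_eq_two {P : ℕ → Prop} {h : ℕ → ℕ}
    (hrange : ∀ n, h n = 1 ∨ h n = 2) (h₁ : P 1) (h₂ : P 2) (n : ℕ) : P (h n) := by
  rcases hrange n with e | e <;> rw [e] <;> assumption

/-- The last index of the maximal block of `n` on which `h` is constant (junk value `0` if `h`
is constant from `n` on). -/
noncomputable def blockEnd {α : Type*} (h : ℕ → α) (n : ℕ) : ℕ :=
  sInf {m | n ≤ m ∧ h (m + 1) ≠ h n}

theorem blockEnd_spec {α : Type*} {h : ℕ → α} {n : ℕ} (hsw : ∃ m, n ≤ m ∧ h (m + 1) ≠ h n) :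
    n ≤ blockEnd h n ∧ h (blockEnd h n + 1) ≠ h n :=
  Nat.sInf_mem hsw

theorem apply_eq_of_le_blockEnd {α : Type*} {h : ℕ → α} {n j : ℕ} (hnj : n ≤ j)
    (hj : j ≤ blockEnd h n) : h j = h n := by
  induction j, hnj using Nat.le_induction with
  | base => rfl
  | succ j hnj _ =>
    by_contra hne
    exact Nat.notMem_of_lt_sInf hj ⟨hnj, hne⟩

theorem exists_apply_succ_ne_of_infinite {h : ℕ → ℕ} (hrange : ∀ n, h n = 1 ∨ h n = 2)
    (hinf1 : {n | h n = 1}.Infinite) (hinf2 : {n | h n = 2}.Infinite) (n : ℕ) :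
    ∃ m, n ≤ m ∧ h (m + 1) ≠ h n := by
  obtain ⟨k, hk, hnk⟩ : ∃ k, h k ≠ h n ∧ n < k := by
    rcases hrange n with e | e
    · obtain ⟨k, hk, hnk⟩ := hinf2.exists_gt n
      exact ⟨k, by rw [e, hk.out]; decide, hnk⟩
    · obtain ⟨k, hk, hnk⟩ := hinf1.exists_gt n
      exact ⟨k, by rw [e, hk.out]; decide, hnk⟩
  obtain ⟨m, rfl⟩ := Nat.exists_eq_add_of_lt hnk
  exact ⟨n + m, Nat.le_add_right n m, hk⟩

section Orbit

variable {E : Type*} [NormedAddCommGroup E]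

theorem Nonexpansive.norm_sub_le_of_apply_eq {T : E → E} (hT : Nonexpansive T) {q : E}
    (hq : T q = q) (x : E) : ‖T x - q‖ ≤ ‖x - q‖ := by
  simpa only [hq] using hT x q

theorem exists_tendsto_norm_sub_of_antitone {u : ℕ → E} {q : E}
    (hanti : Antitone fun n => ‖u n - q‖) : ∃ c, Tendsto (fun n => ‖u n - q‖) atTop (𝓝 c) :=
  ⟨_, tendsto_atTop_ciInf hanti ⟨0, Set.forall_mem_range.2 fun _ => norm_nonneg _⟩⟩

theorem norm_orbit_sub_le {g : ℕ → E → E} {u : ℕ → E} (hu : ∀ n, u (n + 1) = g n (u n))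
    {q : E} {n m : ℕ} (hnm : n ≤ m) (hg : ∀ j, n ≤ j → j < m → Nonexpansive (g j) ∧ g j q = q) :
    ‖u m - q‖ ≤ ‖u n - q‖ := by
  induction m, hnm using Nat.le_induction with
  | base => exact le_rfl
  | succ m hnm ih =>
    obtain ⟨hne, hfix⟩ := hg m hnm m.lt_succ_self
    rw [hu m]
    exact (hne.norm_sub_le_of_apply_eq hfix _).trans
      (ih fun j hj hjm => hg j hj (hjm.trans m.lt_succ_self))

theorem antitone_norm_orbit_sub {g : ℕ → E → E} {u : ℕ → E} (hu : ∀ n, u (n + 1) = g n (u n))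
    (hg : ∀ n, Nonexpansive (g n)) {q : E} (hq : ∀ n, g n q = q) :
    Antitone fun n => ‖u n - q‖ :=
  antitone_nat_of_succ_le fun n => norm_orbit_sub_le hu n.le_succ fun j _ _ => ⟨hg j, hq j⟩

/-- Condition (S) is applied to the orbit on `s`, padded with the fixed point `z` off `s`. -/
theorem CondS.tendsto_indicator_orbit_sub_succ {S : E → E} (hS : CondS S) {z : E} (hz : S z = z)
    {u : ℕ → E} {s : Set ℕ} (hs : ∀ n ∈ s, u (n + 1) = S (u n))
    (hanti : Antitone fun n => ‖u n - z‖) :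
    Tendsto (s.indicator fun n => u n - u (n + 1)) atTop (𝓝 0) := by
  classical
  obtain ⟨c, hc⟩ := exists_tendsto_norm_sub_of_antitone hanti
  have hdecr : Tendsto (fun n => ‖u n - z‖ - ‖u (n + 1) - z‖) atTop (𝓝 0) := by
    simpa only [sub_self, Function.comp_apply] using hc.sub (hc.comp (tendsto_add_atTop_nat 1))
  set v : ℕ → E := s.piecewise u fun _ => z
  have hv : ∀ n, v n - z - (S (v n) - S z) = s.indicator (fun n => u n - u (n + 1)) n := by
    intro n
    by_cases hn : n ∈ s <;> simp [v, hn, hz, hs]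
  have hvnorm : ∀ n, ‖v n - z‖ - ‖S (v n) - S z‖ =
      s.indicator (fun n => ‖u n - z‖ - ‖u (n + 1) - z‖) n := by
    intro n
    by_cases hn : n ∈ s <;> simp [v, hn, hz, hs]
  have hbound : ∀ n, ‖v n - z‖ ≤ ‖u 0 - z‖ := by
    intro n
    by_cases hn : n ∈ s
    · simpa [v, hn] using hanti n.zero_le
    · simp [v, hn]
  have hindicator : Tendsto (s.indicator fun n => ‖u n - z‖ - ‖u (n + 1) - z‖) atTop (𝓝 0) :=
    squeeze_zero (fun n => Set.indicator_nonneg (fun n _ => sub_nonneg.2 (hanti n.le_succ)) n)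
      (Set.indicator_le_self' fun n _ => sub_nonneg.2 (hanti n.le_succ)) hdecr
  simpa only [hv] using hS v (fun _ => z) ⟨_, hbound⟩ (by simpa only [hvnorm] using hindicator)

theorem tendsto_orbit_sub_succ {T : ℕ → E → E} {h : ℕ → ℕ} {u : ℕ → E}
    (hu : ∀ n, u (n + 1) = T (h n) (u n)) (hrange : ∀ n, h n = 1 ∨ h n = 2)
    (hT1 : StronglyNonexpansive (T 1)) (hT2 : StronglyNonexpansive (T 2)) {z : E}
    (hz1 : T 1 z = z) (hz2 : T 2 z = z) : Tendsto (fun n => u n - u (n + 1)) atTop (𝓝 0) := by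
  have hanti := antitone_norm_orbit_sub hu
    (forall_apply_of_eq_one_or_eq_two (P := fun i => Nonexpansive (T i)) hrange hT1.1 hT2.1)
    (forall_apply_of_eq_one_or_eq_two (P := fun i => T i z = z) hrange hz1 hz2)
  have hpart : ∀ i, CondS (T i) → T i z = z →
      Tendsto ({n | h n = i}.indicator fun n => u n - u (n + 1)) atTop (𝓝 0) :=
    fun i hS hz => hS.tendsto_indicator_orbit_sub_succ hz (fun n hn => by rw [hu, hn.out]) hanti
  have hsum := (hpart 1 hT1.2 hz1).add (hpart 2 hT2.2 hz2)
  rw [add_zero] at hsum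
  refine hsum.congr fun n => ?_
  rcases hrange n with e | e <;> simp [Set.indicator, e]

theorem norm_orbit_succ_sub_apply_le {ι : Type*} {T : ι → E → E} {h : ℕ → ι} {u : ℕ → E}
    (hu : ∀ n, u (n + 1) = T (h n) (u n)) {k : ℕ} (hT : Nonexpansive (T (h k))) {i : ι}
    (hi : i = h k ∨ i = h (k + 1)) :
    ‖u (k + 1) - T i (u (k + 1))‖ ≤ ‖u k - u (k + 1)‖ + ‖u (k + 1) - u (k + 1 + 1)‖ := by
  rcases hi with rfl | rfl
  · calc ‖u (k + 1) - T (h k) (u (k + 1))‖ = ‖T (h k) (u k) - T (h k) (u (k + 1))‖ := by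
          nth_rewrite 1 [hu k]; rfl
      _ ≤ ‖u k - u (k + 1)‖ := hT _ _
      _ ≤ _ := le_add_of_nonneg_right (norm_nonneg _)
  · rw [← hu (k + 1)]
    exact le_add_of_nonneg_left (norm_nonneg _)

/-- Right after the end of a block both operators almost fix the iterate: the one of the
block because the previous step was small, the other because the next step is small. -/
theorem tendsto_norm_orbit_sub_apply_blockEnd {T : ℕ → E → E} {h : ℕ → ℕ} {u : ℕ → E}
    (hu : ∀ n, u (n + 1) = T (h n) (u n)) (hrange : ∀ n, h n = 1 ∨ h n = 2)
    (hT1 : Nonexpansive (T 1)) (hT2 : Nonexpansive (T 2))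
    (hsw : ∀ n, ∃ m, n ≤ m ∧ h (m + 1) ≠ h n)
    (hstep : Tendsto (fun n => u n - u (n + 1)) atTop (𝓝 0)) {i : ℕ} (hi : i = 1 ∨ i = 2) :
    Tendsto (fun n => ‖u (blockEnd h n + 1) - T i (u (blockEnd h n + 1))‖) atTop (𝓝 0) := by
  have hb : Tendsto (blockEnd h) atTop atTop :=
    tendsto_atTop_mono (fun n => (blockEnd_spec (hsw n)).1) tendsto_id
  have hstep' : Tendsto (fun n => ‖u n - u (n + 1)‖) atTop (𝓝 0) := by
    simpa only [norm_zero] using hstep.norm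
  have hbound : ∀ n, ‖u (blockEnd h n + 1) - T i (u (blockEnd h n + 1))‖ ≤
      ‖u (blockEnd h n) - u (blockEnd h n + 1)‖ +
        ‖u (blockEnd h n + 1) - u (blockEnd h n + 1 + 1)‖ := by
    intro n
    obtain ⟨hn, hne⟩ := blockEnd_spec (hsw n)
    have heq := apply_eq_of_le_blockEnd hn le_rfl
    refine norm_orbit_succ_sub_apply_le hu
      (forall_apply_of_eq_one_or_eq_two (P := fun i => Nonexpansive (T i)) hrange hT1 hT2 _) ?_
    have := hrange (blockEnd h n + 1)
    have := hrange n
    omega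
  refine squeeze_zero (fun _ => norm_nonneg _) hbound ?_
  simpa using (hstep'.comp hb).add (hstep'.comp (tendsto_add_atTop_nat 1 |>.comp hb))

end Orbit

theorem apply_eq_of_weakTendsto_orbit {E : Type*} [NormedAddCommGroup E] [InnerProductSpace ℝ E]
    [CompleteSpace E] {T : ℕ → E → E} {h : ℕ → ℕ} {u : ℕ → E}
    (hu : ∀ n, u (n + 1) = T (h n) (u n)) (hrange : ∀ n, h n = 1 ∨ h n = 2)
    (hT1 : Nonexpansive (T 1)) (hT2 : Nonexpansive (T 2)) {C : ℝ} (hC : ∀ n, ‖u n‖ ≤ C)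
    (hsw : ∀ n, ∃ m, n ≤ m ∧ h (m + 1) ≠ h n)
    (hstep : Tendsto (fun n => u n - u (n + 1)) atTop (𝓝 0)) {𝒰 : Ultrafilter ℕ}
    (h𝒰 : (𝒰 : Filter ℕ) ≤ atTop) {q : E} (hq : WeakTendsto u 𝒰 q) : T 1 q = q ∧ T 2 q = q := by
  have hne := forall_apply_of_eq_one_or_eq_two (P := fun i => Nonexpansive (T i)) hrange hT1 hT2
  set m : ℕ → ℕ := fun n => blockEnd h n + 1
  have hm : Tendsto m atTop atTop :=
    tendsto_atTop_mono (fun n => (blockEnd_spec (hsw n)).1.trans (blockEnd h n).le_succ) tendsto_id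
  obtain ⟨w, hw⟩ := exists_weakTendsto_of_norm_le (fun n => hC (m n)) 𝒰
  have hw₁ : T 1 w = w := hT1.apply_eq_of_weakTendsto (fun n => hC (m n)) hw <|
    (tendsto_norm_orbit_sub_apply_blockEnd hu hrange hT1 hT2 hsw hstep (Or.inl rfl)).mono_left h𝒰
  have hw₂ : T 2 w = w := hT2.apply_eq_of_weakTendsto (fun n => hC (m n)) hw <|
    (tendsto_norm_orbit_sub_apply_blockEnd hu hrange hT1 hT2 hsw hstep (Or.inr rfl)).mono_left h𝒰
  obtain ⟨c, hc⟩ := exists_tendsto_norm_sub_of_antitone <| antitone_norm_orbit_sub hu hne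
    (forall_apply_of_eq_one_or_eq_two (P := fun i => T i w = w) hrange hw₁ hw₂)
  obtain ⟨i, hTi, hs⟩ : ∃ i, Nonexpansive (T i) ∧ {n | h n = i} ∈ 𝒰 := by
    rcases 𝒰.mem_or_compl_mem {n | h n = 1} with h₁ | h₂
    · exact ⟨1, hT1, h₁⟩
    · exact ⟨2, hT2, mem_of_superset h₂ fun n hn => (hrange n).resolve_left hn⟩
  have hstep' : Tendsto (fun n => ‖u n - u (n + 1)‖) atTop (𝓝 0) := by
    simpa only [norm_zero] using hstep.norm
  have hqi : T i q = q := by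
    refine hTi.apply_eq_of_weakTendsto hC hq <| (hstep'.mono_left h𝒰).congr' ?_
    filter_upwards [hs] with n hn
    rw [hu, hn]
  have hmono : ∀ᶠ n in (𝒰 : Filter ℕ), ‖u (m n) - q‖ ≤ ‖u n - q‖ := by
    filter_upwards [hs] with n hn
    refine norm_orbit_sub_le hu ((blockEnd_spec (hsw n)).1.trans (blockEnd h n).le_succ)
      fun j hnj hjm => ⟨hne j, ?_⟩
    rw [apply_eq_of_le_blockEnd hnj (Nat.lt_succ_iff.mp hjm), hn, hqi]
  rw [hq.eq_of_eventually_norm_sub_le hw (hc.mono_left h𝒰) ((hc.comp hm).mono_left h𝒰) hmono]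
  exact ⟨hw₁, hw₂⟩

/-- Theorem 2.12: unrestricted products of two strongly nonexpansive operators,
each appearing infinitely often, converge weakly to a common fixed point. -/
theorem stmt12
    (T : ℕ → H → H)
    (hT1 : StronglyNonexpansive (T 1)) (hT2 : StronglyNonexpansive (T 2))
    (hfix : ∃ z : H, T 1 z = z ∧ T 2 z = z)
    (h : ℕ → ℕ) (hrange : ∀ n : ℕ, h n = 1 ∨ h n = 2)
    (hinf1 : {n : ℕ | h n = 1}.Infinite) (hinf2 : {n : ℕ | h n = 2}.Infinite)
    (x : H) :
    ∃ p, (T 1 p = p ∧ T 2 p = p) ∧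
      WeakConvergesTo (fun n => compSeq (n + 1) (fun i => T (h i)) x) p := by
  obtain ⟨z, hz1, hz2⟩ := hfix
  set u : ℕ → H := fun n => compSeq n (fun i => T (h i)) x
  have hu : ∀ n, u (n + 1) = T (h n) (u n) := fun _ => rfl
  have hne :=
    forall_apply_of_eq_one_or_eq_two (P := fun i => Nonexpansive (T i)) hrange hT1.1 hT2.1
  have hfixed : ∀ w, T 1 w = w → T 2 w = w → ∀ n, T (h n) w = w := fun w hw₁ hw₂ =>
    forall_apply_of_eq_one_or_eq_two (P := fun i => T i w = w) hrange hw₁ hw₂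
  have hC : ∀ n, ‖u n‖ ≤ ‖u 0 - z‖ + ‖z‖ := fun n =>
    (norm_le_norm_sub_add (u n) z).trans <|
      add_le_add (antitone_norm_orbit_sub hu hne (hfixed z hz1 hz2) n.zero_le) le_rfl
  obtain ⟨p, hp, hconv⟩ :=
    exists_weakTendsto_of_clusterPt_mem (F := {w | T 1 w = w ∧ T 2 w = w}) hC
      (fun w hw => exists_tendsto_norm_sub_of_antitone <|
        antitone_norm_orbit_sub hu hne (hfixed w hw.1 hw.2))
    fun 𝒰 h𝒰 q hq => apply_eq_of_weakTendsto_orbit hu hrange hT1.1 hT2.1 hC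
      (exists_apply_succ_ne_of_infinite hrange hinf1 hinf2)
      (tendsto_orbit_sub_succ hu hrange hT1 hT2 hz1 hz2) h𝒰 hq
  exact ⟨p, hp, fun y => (hconv y).comp (tendsto_add_atTop_nat 1)⟩
end

section
/- Let H be a real Hilbert space, let T : H → H be a nonexpansive operator, and let (v_n)_{n=0}^∞ be a sequence in H. Suppose that (v_n) and (Tv_n) both converge weakly to some v ∈ H and that ‖v_n‖ − ‖Tv_n‖ → 0. Then v ∈ Fix(T). -/
open Filter Topology RealInnerProductSpace

variable {H : Type*} [NormedAddCommGroup H] [InnerProductSpace ℝ H] [CompleteSpace H]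

/-- Lemma 2.15: a weak limit shared by `v_n` and `T v_n` with asymptotically
equal norms is a fixed point of the nonexpansive operator `T`. -/
theorem stmt13
    (T : H → H) (hT : Nonexpansive T) (v : ℕ → H) (w : H)
    (hv : WeakConvergesTo v w) (hTv : WeakConvergesTo (fun n => T (v n)) w)
    (hnorm : Tendsto (fun n => ‖v n‖ - ‖T (v n)‖) atTop (𝓝 0)) :
    T w = w := by

  -- v is bounded via Banach–Steinhaus
  obtain ⟨C, hC⟩ : ∃ C, ∀ n, ‖v n‖ ≤ C := by
    obtain ⟨C', hC'⟩ := banach_steinhaus (g := fun n => innerSL ℝ (v n)) (fun y => by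
      obtain ⟨M, hM⟩ := (hv y).norm.bddAbove_range
      exact ⟨M, fun n => by simpa using hM ⟨n, rfl⟩⟩)
    exact ⟨C', fun n => by simpa [innerSL_apply_norm] using hC' n⟩
  -- Tv is bounded
  have hTb : ∀ n, ‖T (v n)‖ ≤ C + 2 * ‖w‖ + ‖T w‖ := fun n => by
    have h1 : ‖T (v n) - T w‖ ≤ ‖v n - w‖ := hT _ _
    have h2 : ‖v n - w‖ ≤ ‖v n‖ + ‖w‖ := norm_sub_le _ _
    have h3 : ‖T (v n)‖ - ‖T w‖ ≤ ‖T (v n) - T w‖ := norm_sub_norm_le _ _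
    have h4 : (0:ℝ) ≤ ‖w‖ := norm_nonneg _
    have := hC n
    linarith
  -- squared norms difference tends to 0
  have hsq : Tendsto (fun n => ‖v n‖ ^ 2 - ‖T (v n)‖ ^ 2) atTop (𝓝 0) := by
    have key : ∀ n, ‖‖v n‖ ^ 2 - ‖T (v n)‖ ^ 2‖
        ≤ |‖v n‖ - ‖T (v n)‖| * (2 * C + 2 * ‖w‖ + ‖T w‖) := fun n => by
      have : ‖v n‖ ^ 2 - ‖T (v n)‖ ^ 2 = (‖v n‖ - ‖T (v n)‖) * (‖v n‖ + ‖T (v n)‖) := by ring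
      rw [Real.norm_eq_abs, this, abs_mul]
      have h1 := hC n
      have h2 := hTb n
      have h3 : |‖v n‖ + ‖T (v n)‖| ≤ 2 * C + 2 * ‖w‖ + ‖T w‖ := by
        rw [abs_of_nonneg (by positivity)]; linarith
      exact mul_le_mul_of_nonneg_left h3 (abs_nonneg _)
    refine squeeze_zero_norm key ?_
    have := (hnorm.abs).mul_const (2 * C + 2 * ‖w‖ + ‖T w‖)
    simpa using this
  -- main inequality
  have hb : ∀ n, 0 ≤ ‖v n - w‖ ^ 2 - ‖T (v n) - T w‖ ^ 2 := fun n => by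
    have h1 := hT (v n) w
    have h2 : (0:ℝ) ≤ ‖T (v n) - T w‖ := norm_nonneg _
    nlinarith
  have hlim : Tendsto (fun n => ‖v n - w‖ ^ 2 - ‖T (v n) - T w‖ ^ 2) atTop
      (𝓝 (-‖w - T w‖ ^ 2)) := by
    have expand : ∀ n, ‖v n - w‖ ^ 2 - ‖T (v n) - T w‖ ^ 2
        = (‖v n‖ ^ 2 - ‖T (v n)‖ ^ 2) - 2 * ⟪v n, w⟫ + 2 * ⟪T (v n), T w⟫
          + ‖w‖ ^ 2 - ‖T w‖ ^ 2 := fun n => by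
      rw [@norm_sub_sq_real, @norm_sub_sq_real]; ring
    have trg : (-‖w - T w‖ ^ 2 : ℝ)
        = 0 - 2 * ⟪w, w⟫ + 2 * ⟪w, T w⟫ + ‖w‖ ^ 2 - ‖T w‖ ^ 2 := by
      rw [@norm_sub_sq_real, real_inner_self_eq_norm_sq]; ring
    simp only [expand]
    rw [trg]
    exact ((((hsq.sub ((hv w).const_mul 2)).add ((hTv (T w)).const_mul 2)).add
      tendsto_const_nhds).sub tendsto_const_nhds)
  have : (0:ℝ) ≤ -‖w - T w‖ ^ 2 := ge_of_tendsto hlim (Eventually.of_forall hb)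
  have hz : ‖w - T w‖ ^ 2 = 0 := le_antisymm (by linarith) (by positivity)
  have : w - T w = 0 := by
    have := pow_eq_zero_iff (n := 2) (by norm_num) |>.mp hz
    exact norm_eq_zero.mp this
  have := sub_eq_zero.mp this
  exact this.symm
end

section
/- Let H be a real Hilbert space, let {T_α}_{α∈I} be a family of nonexpansive operators on H, and let h : ℕ → I be a mapping. Let (P_{n_k})_{k=0}^∞ and (P_{n'_k})_{k=0}^∞ be two subsequences of the unrestricted product (P_n)_{n=0}^∞ of {T_α}_{α∈I} determined by h, and let x ∈ H. If x₁ and x₂ are common fixed points of the family {T_α}_{α∈I} such that P_{n_k} x converges weakly to x₁ and P_{n'_k} x converges weakly to x₂, then x₁ = x₂. -/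
open Filter Topology RealInnerProductSpace

variable {H : Type*} [NormedAddCommGroup H] [InnerProductSpace ℝ H] [CompleteSpace H]

/-- Lemma 2.16: two weak subsequential limits of the unrestricted product
sequence which are common fixed points must coincide. -/
theorem stmt14 {I : Type*}
    (T : I → H → H) (hT : ∀ a : I, Nonexpansive (T a))
    (h : ℕ → I) (x : H)
    (nk nk' : ℕ → ℕ) (hnk : StrictMono nk) (hnk' : StrictMono nk')
    (x₁ x₂ : H) (hx₁ : ∀ a : I, T a x₁ = x₁) (hx₂ : ∀ a : I, T a x₂ = x₂)
    (hw₁ : WeakConvergesTo (fun k => compSeq (nk k + 1) (fun i => T (h i)) x) x₁)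
    (hw₂ : WeakConvergesTo (fun k => compSeq (nk' k + 1) (fun i => T (h i)) x) x₂) :
    x₁ = x₂ := by

  set F : ℕ → H → H := fun i => T (h i) with hF
  set u : ℕ → H := fun n => compSeq (n+1) F x with hu
  -- monotonicity of distances to common fixed points
  have key : ∀ z : H, (∀ a : I, T a z = z) → Antitone (fun n => ‖u n - z‖) := by
    intro z hz
    refine antitone_nat_of_succ_le fun n => ?_
    have h1 : u (n+1) = T (h (n+1)) (u n) := rfl
    have h2 := hT (h (n+1)) (u n) z
    rw [hz (h (n+1))] at h2
    simpa [h1] using h2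
  have hbdd : ∀ z : H, BddBelow (Set.range fun n => ‖u n - z‖) :=
    fun z => ⟨0, by rintro _ ⟨n, rfl⟩; positivity⟩
  have hA : Tendsto (fun n => ‖u n - x₁‖) atTop (𝓝 (⨅ n, ‖u n - x₁‖)) :=
    tendsto_atTop_ciInf (key x₁ hx₁) (hbdd x₁)
  have hB : Tendsto (fun n => ‖u n - x₂‖) atTop (𝓝 (⨅ n, ‖u n - x₂‖)) :=
    tendsto_atTop_ciInf (key x₂ hx₂) (hbdd x₂)
  set A := ⨅ n, ‖u n - x₁‖
  set B := ⨅ n, ‖u n - x₂‖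
  have hd : Tendsto (fun n => ‖u n - x₁‖^2 - ‖u n - x₂‖^2) atTop (𝓝 (A^2 - B^2)) :=
    ((hA.pow 2).sub (hB.pow 2))
  have hdexp : ∀ n, ‖u n - x₁‖^2 - ‖u n - x₂‖^2
      = ‖x₁‖^2 - ‖x₂‖^2 - 2 * ⟪u n, x₁ - x₂⟫ := by
    intro n
    rw [norm_sub_sq_real, norm_sub_sq_real, inner_sub_right]
    ring
  -- limits along the two subsequences
  have hlim : ∀ (m : ℕ → ℕ), StrictMono m → ∀ z : H,
      WeakConvergesTo (fun k => compSeq (m k + 1) (fun i => T (h i)) x) z →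
      A^2 - B^2 = ‖x₁‖^2 - ‖x₂‖^2 - 2 * ⟪z, x₁ - x₂⟫ := by
    intro m hm z hwz
    have h1 : Tendsto (fun k => ‖u (m k) - x₁‖^2 - ‖u (m k) - x₂‖^2) atTop (𝓝 (A^2 - B^2)) :=
      hd.comp hm.tendsto_atTop
    have h2 : Tendsto (fun k => ⟪u (m k), x₁ - x₂⟫) atTop (𝓝 ⟪z, x₁ - x₂⟫) :=
      hwz (x₁ - x₂)
    have h3 : Tendsto (fun k => ‖x₁‖^2 - ‖x₂‖^2 - 2 * ⟪u (m k), x₁ - x₂⟫) atTop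
        (𝓝 (‖x₁‖^2 - ‖x₂‖^2 - 2 * ⟪z, x₁ - x₂⟫)) :=
      (tendsto_const_nhds.sub (h2.const_mul 2))
    exact tendsto_nhds_unique (h1.congr fun k => hdexp (m k)) h3
  have e1 := hlim nk hnk x₁ hw₁
  have e2 := hlim nk' hnk' x₂ hw₂
  have : ⟪x₁ - x₂, x₁ - x₂⟫ = 0 := by
    have : ⟪x₁, x₁ - x₂⟫ = ⟪x₂, x₁ - x₂⟫ := by linarith [e1.symm.trans e2]
    rw [inner_sub_left]; linarith
  have := (inner_self_eq_zero (𝕜 := ℝ)).mp this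
  exact sub_eq_zero.mp this
end

section
/- Let H be a real Hilbert space and let {C_i}_{i=1}^r be a finite family of nonempty, closed and convex subsets of H such that int ∩_{i=1}^r C_i ≠ ∅. Then the fixed point set of the r-set DR operator T_{{C_i}_{i=1}^r} := 2⁻¹(Id + R_{C_r}∘⋯∘R_{C_1}) equals ∩_{i=1}^r C_i. -/
open Filter Topology RealInnerProductSpace

variable {H : Type*} [NormedAddCommGroup H] [InnerProductSpace ℝ H] [CompleteSpace H]

set_option linter.unusedSectionVars false in
set_option linter.unusedSectionVars false in
lemma my_var_ineq {C : Set H} (hCc : Convex ℝ C) {P : H → H} (hP : IsProjOn C P)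
    (x : H) {a : H} (ha : a ∈ C) : ⟪x - P x, a - P x⟫ ≤ 0 := by
  have h := hP x
  haveI : Nonempty C := ⟨⟨P x, h.1⟩⟩
  have hinf : ‖x - P x‖ = ⨅ w : C, ‖x - w‖ := by
    apply le_antisymm
    · exact le_ciInf fun w => h.2 w w.2
    · have hbdd : BddBelow (Set.range fun w : C => ‖x - (w:H)‖) :=
        ⟨0, fun b hb => by obtain ⟨w, rfl⟩ := hb; positivity⟩
      exact ciInf_le hbdd ⟨P x, h.1⟩
  exact (norm_eq_iInf_iff_real_inner_le_zero hCc h.1).mp hinf a ha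

set_option linter.unusedSectionVars false in
lemma my_proj_fix {C : Set H} {P : H → H} (hP : IsProjOn C P) {x : H} (hx : x ∈ C) : P x = x := by
  have h := (hP x).2 x hx
  simp only [sub_self, norm_zero] at h
  have := norm_le_zero_iff.mp h
  rw [sub_eq_zero] at this
  exact this.symm

set_option linter.unusedSectionVars false in
lemma my_refl_id (x p a : H) :
    ‖x - a‖^2 - ‖((2:ℝ)•p - x) - a‖^2 = -4 * ⟪x - p, a - p⟫ := by
  simp only [← real_inner_self_eq_norm_sq]
  simp only [inner_sub_left, inner_sub_right, real_inner_smul_left, real_inner_smul_right,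
    real_inner_comm x p, real_inner_comm x a, real_inner_comm p a]
  ring


/-- Lemma 2.7: the fixed point set of the r-set DR operator equals the
intersection of the sets, provided the intersection has nonempty interior. -/
theorem stmt15
    (r : ℕ)
    (C : ℕ → Set H)
    (hC : ∀ i ∈ Set.Icc 1 r, (C i).Nonempty ∧ IsClosed (C i) ∧ Convex ℝ (C i))
    (proj : ℕ → H → H) (hproj : ∀ i ∈ Set.Icc 1 r, IsProjOn (C i) (proj i))
    (hint : (interior (⋂ i ∈ Set.Icc 1 r, C i)).Nonempty) :
    {z : H | (2⁻¹ : ℝ) • (z + compSeq r (fun j y => (2 : ℝ) • proj (j + 1) y - y) z) = z} =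
      ⋂ i ∈ Set.Icc 1 r, C i := by
  classical
  set g : ℕ → H → H := fun j y => (2:ℝ) • proj (j+1) y - y with hg
  ext z
  simp only [Set.mem_setOf_eq, Set.mem_iInter, Set.mem_Icc]
  constructor
  · intro hz
    -- forward direction
    have hfix : compSeq r g z = z := by
      have hw : z + compSeq r g z = z + z := by
        calc z + compSeq r g z = (2:ℝ) • ((2⁻¹:ℝ) • (z + compSeq r g z)) := by
              rw [smul_smul]; norm_num
          _ = (2:ℝ) • z := by rw [hz]
          _ = z + z := two_smul ℝ z
      exact add_left_cancel hw
    set zs : ℕ → H := fun j => compSeq j g z with hzs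
    have hzs0 : zs 0 = z := rfl
    have hzssucc : ∀ j, zs (j+1) = (2:ℝ) • proj (j+1) (zs j) - zs j := fun j => rfl
    obtain ⟨a₀, ha₀⟩ := hint
    obtain ⟨ε, hε, hball⟩ := Metric.isOpen_iff.mp isOpen_interior a₀ ha₀
    have hsub : ∀ a ∈ Metric.ball a₀ ε, ∀ i, 1 ≤ i → i ≤ r → a ∈ C i := by
      intro a ha i h1 h2
      have := interior_subset (hball ha)
      exact Set.mem_iInter₂.mp this i ⟨h1, h2⟩
    have hkey : ∀ j < r, ∀ a ∈ Metric.ball a₀ ε,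
        ⟪zs j - proj (j+1) (zs j), a - proj (j+1) (zs j)⟫ = 0 := by
      intro j hj a hamem
      set F : ℕ → ℝ := fun k => ‖zs k - a‖^2 with hF
      have hstep : ∀ k, k < r → F (k+1) ≤ F k ∧
          (F k ≤ F (k+1) → ⟪zs k - proj (k+1) (zs k), a - proj (k+1) (zs k)⟫ = 0) := by
        intro k hk
        have hmem : (k+1) ∈ Set.Icc 1 r := ⟨Nat.succ_le_succ (Nat.zero_le k), hk⟩
        have hvi := my_var_ineq (hC (k+1) hmem).2.2 (hproj (k+1) hmem) (zs k)
          (hsub a hamem (k+1) hmem.1 hmem.2)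
        have hid := my_refl_id (zs k) (proj (k+1) (zs k)) a
        rw [← hzssucc k] at hid
        constructor
        · have : F k - F (k+1) = -4 * ⟪zs k - proj (k+1) (zs k), a - proj (k+1) (zs k)⟫ := hid
          linarith
        · intro he
          have : F k - F (k+1) = -4 * ⟪zs k - proj (k+1) (zs k), a - proj (k+1) (zs k)⟫ := hid
          linarith
      have hmono : ∀ i j : ℕ, i ≤ j → j ≤ r → F j ≤ F i := by
        intro i j hij hjr
        induction j with
        | zero => rw [Nat.le_zero.mp hij]
        | succ n ih =>
          rcases Nat.lt_or_ge i (n+1) with h | h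
          · exact le_trans (hstep n hjr).1
              (ih (Nat.lt_succ_iff.mp h) (le_trans (Nat.le_succ n) hjr))
          · rw [le_antisymm hij h]
      have hFr : F r = F 0 := by
        simp only [hF]
        rw [show zs r = zs 0 from hfix]
      have h1 : F j ≤ F 0 := hmono 0 j (Nat.zero_le j) (le_of_lt hj)
      have h2 : F r ≤ F (j+1) := hmono (j+1) r hj le_rfl
      have h3 : F (j+1) ≤ F j := (hstep j hj).1
      exact (hstep j hj).2 (by linarith)
    have hprojfix : ∀ j, j < r → proj (j+1) (zs j) = zs j := by
      intro j hj
      have h0 := hkey j hj a₀ (Metric.mem_ball_self hε)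
      set p := proj (j+1) (zs j) with hp
      set u := zs j - p with hu
      set t : ℝ := ε / (2 * (‖u‖ + 1)) with ht
      have htpos : 0 < t := by positivity
      have hmemb : a₀ + t • u ∈ Metric.ball a₀ ε := by
        rw [Metric.mem_ball, dist_eq_norm]
        simp only [add_sub_cancel_left, norm_smul, Real.norm_eq_abs, abs_of_pos htpos]
        have hne : (‖u‖:ℝ) + 1 ≠ 0 := by positivity
        have heq : t * (‖u‖ + 1) = ε / 2 := by
          rw [ht]; field_simp
        nlinarith [norm_nonneg u]
      have h1 := hkey j hj (a₀ + t • u) hmemb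
      have h2 : (a₀ + t • u) - p = (a₀ - p) + t • u := by abel
      rw [← hp, ← hu, h2, inner_add_right, real_inner_smul_right] at h1
      rw [h0, real_inner_self_eq_norm_sq, zero_add] at h1
      have hu0 : ‖u‖ = 0 := by
        have h4 : ‖u‖^2 = 0 := by
          rcases mul_eq_zero.mp h1 with h | h
          · exact absurd h (ne_of_gt htpos)
          · exact h
        exact pow_eq_zero_iff (by norm_num) |>.mp h4
      have : u = 0 := norm_eq_zero.mp hu0
      rw [hu, sub_eq_zero] at this
      exact this.symm
    have hzsconst : ∀ j, j ≤ r → zs j = z := by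
      intro j hj
      induction j with
      | zero => rfl
      | succ n ih =>
        have hn : n < r := hj
        rw [hzssucc n, hprojfix n hn, ih (le_of_lt hn), two_smul, add_sub_cancel_right]
    intro i hi
    obtain ⟨hi1, hi2⟩ := hi
    obtain ⟨j, rfl⟩ : ∃ j, i = j + 1 := ⟨i - 1, (Nat.succ_pred_eq_of_pos hi1).symm⟩
    have hj : j < r := hi2
    have := hprojfix j hj
    rw [hzsconst j (le_of_lt hj)] at this
    rw [← this]
    exact (hproj (j+1) ⟨hi1, hi2⟩ z).1
  · intro hz
    have hfix : ∀ j, j ≤ r → compSeq j g z = z := by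
      intro j hj
      induction j with
      | zero => rfl
      | succ n ih =>
        have hn : n < r := hj
        have hmem : (n+1) ∈ Set.Icc 1 r := ⟨Nat.succ_le_succ (Nat.zero_le n), hn⟩
        have : compSeq (n+1) g z = (2:ℝ) • proj (n+1) (compSeq n g z) - compSeq n g z := rfl
        rw [this, ih (le_of_lt hn), my_proj_fix (hproj (n+1) hmem) (hz (n+1) ⟨hmem.1, hmem.2⟩),
          two_smul, add_sub_cancel_right]
    rw [hfix r le_rfl, ← two_smul ℝ z, smul_smul]
    norm_num
end

section
/- Let H be a real Hilbert space, let T : H → H be a firmly nonexpansive operator and let λ ∈ (0,2). Then the λ-relaxation T_λ := (1−λ)Id + λT of T is strongly nonexpansive. -/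
open Filter Topology RealInnerProductSpace

variable {H : Type*} [NormedAddCommGroup H] [InnerProductSpace ℝ H] [CompleteSpace H]

lemma relax_key (T : H → H) (hT : FirmlyNonexpansive T) (lam : ℝ) (hlam : 0 ≤ lam)
    (x y : H) :
    ‖((1 - lam) • x + lam • T x) - ((1 - lam) • y + lam • T y)‖ ^ 2
      + lam * (2 - lam) * ‖(x - y) - (T x - T y)‖ ^ 2 ≤ ‖x - y‖ ^ 2 := by
  have hd : ((1 - lam) • x + lam • T x) - ((1 - lam) • y + lam • T y)
      = (x - y) - lam • ((x - y) - (T x - T y)) := by module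
  rw [hd]
  set u := x - y with hu
  set v := T x - T y with hv
  have hfirm : ‖v‖ ^ 2 ≤ ⟪v, u⟫ := hT x y
  have h1 : ‖u - lam • (u - v)‖ ^ 2
      = ‖u‖ ^ 2 - 2 * (lam * ⟪u, u - v⟫) + lam ^ 2 * ‖u - v‖ ^ 2 := by
    rw [norm_sub_sq_real, real_inner_smul_right, norm_smul, Real.norm_eq_abs, mul_pow, sq_abs]
  rw [h1]
  have h2 : ⟪u, u - v⟫ = ‖u‖ ^ 2 - ⟪u, v⟫ := by
    rw [inner_sub_right, real_inner_self_eq_norm_sq]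
  have h3 : ‖u - v‖ ^ 2 = ‖u‖ ^ 2 - 2 * ⟪u, v⟫ + ‖v‖ ^ 2 := by
    rw [norm_sub_sq_real]
  have h4 : ⟪v, u⟫ = ⟪u, v⟫ := real_inner_comm u v
  nlinarith [mul_nonneg hlam (by linarith : (0:ℝ) ≤ ⟪u, v⟫ - ‖v‖ ^ 2)]

/-- Theorem 1.14: the λ-relaxation of a firmly nonexpansive operator with
λ ∈ (0,2) is strongly nonexpansive. -/
theorem stmt16
    (T : H → H) (hT : FirmlyNonexpansive T) (lam : ℝ)
    (hlam : lam ∈ Set.Ioo (0 : ℝ) 2) :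
    StronglyNonexpansive (fun x => (1 - lam) • x + lam • T x) := by
  obtain ⟨hl0, hl2⟩ := hlam
  have hl0' : (0:ℝ) ≤ lam := le_of_lt hl0
  have hpos : 0 < lam * (2 - lam) := by nlinarith
  have hne : Nonexpansive (fun x => (1 - lam) • x + lam • T x) := by
    intro x y
    have key := relax_key T hT lam hl0' x y
    have h1 : lam * (2 - lam) * ‖(x - y) - (T x - T y)‖ ^ 2 ≥ 0 := by positivity
    nlinarith [norm_nonneg (((1 - lam) • x + lam • T x) - ((1 - lam) • y + lam • T y)),
      norm_nonneg (x - y)]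
  refine ⟨hne, ?_⟩
  intro x y ⟨c, hc⟩ htend
  have hc0 : (0:ℝ) ≤ c := le_trans (norm_nonneg _) (hc 0)
  -- show ‖(x n - y n) - (T (x n) - T (y n))‖ ^ 2 → 0 by squeeze
  have hsq : Tendsto (fun n => ‖(x n - y n) - (T (x n) - T (y n))‖ ^ 2) atTop (𝓝 0) := by
    have hbound : ∀ n, ‖(x n - y n) - (T (x n) - T (y n))‖ ^ 2
        ≤ (2 * c / (lam * (2 - lam))) *
          (‖x n - y n‖ - ‖((1 - lam) • x n + lam • T (x n)) - ((1 - lam) • y n + lam • T (y n))‖) := by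
      intro n
      have key := relax_key T hT lam hl0' (x n) (y n)
      set a := ‖x n - y n‖
      set b := ‖((1 - lam) • x n + lam • T (x n)) - ((1 - lam) • y n + lam • T (y n))‖
      have hba : b ≤ a := hne (x n) (y n)
      have hb0 : (0:ℝ) ≤ b := norm_nonneg _
      have hac : a ≤ c := hc n
      have h5 : lam * (2 - lam) * ‖(x n - y n) - (T (x n) - T (y n))‖ ^ 2
          ≤ (a - b) * (a + b) := by nlinarith
      rw [div_mul_eq_mul_div, le_div_iff₀ hpos]
      nlinarith [mul_nonneg (sub_nonneg.2 hba) (by linarith : (0:ℝ) ≤ 2 * c - (a + b))]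
    have htend' : Tendsto (fun n => (2 * c / (lam * (2 - lam))) *
        (‖x n - y n‖ - ‖((1 - lam) • x n + lam • T (x n)) - ((1 - lam) • y n + lam • T (y n))‖))
        atTop (𝓝 0) := by
      have := htend.const_mul (2 * c / (lam * (2 - lam)))
      simpa using this
    exact squeeze_zero (fun n => by positivity) hbound htend'
  have hnorm : Tendsto (fun n => ‖(x n - y n) - (T (x n) - T (y n))‖) atTop (𝓝 0) := by
    have := hsq.sqrt
    simpa [Real.sqrt_sq (norm_nonneg _)] using this
  have hvec : Tendsto (fun n => (x n - y n) - (T (x n) - T (y n))) atTop (𝓝 (0:H)) := by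
    rw [tendsto_zero_iff_norm_tendsto_zero]
    exact hnorm
  have heq : ∀ n, (x n - y n) -
      (((1 - lam) • x n + lam • T (x n)) - ((1 - lam) • y n + lam • T (y n)))
      = lam • ((x n - y n) - (T (x n) - T (y n))) := by intro n; module
  have := hvec.const_smul lam
  simp only [smul_zero] at this
  simpa [heq] using this
end

section
/- Let H be a real Hilbert space and let T : H → H be a strongly nonexpansive operator with Fix(T) ≠ ∅. Then T is asymptotically regular, i.e. for every x ∈ H, ‖T^{n+1}x − T^n x‖ → 0 as n → ∞. -/
open Filter Topology RealInnerProductSpace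

variable {H : Type*} [NormedAddCommGroup H] [InnerProductSpace ℝ H] [CompleteSpace H]

theorem Antitone.tendsto_sub_succ_of_bddBelow {a : ℕ → ℝ} (ha : Antitone a)
    (hb : BddBelow (Set.range a)) : Tendsto (fun n => a n - a (n + 1)) atTop (𝓝 0) := by
  have hlim := tendsto_atTop_ciInf ha hb
  simpa using hlim.sub (hlim.comp (tendsto_add_atTop_nat 1))

section NormedGroup

variable {E : Type*} [NormedAddCommGroup E]

theorem Nonexpansive.antitone_norm_iterate_sub {T : E → E} (hT : Nonexpansive T) {z : E}
    (hz : T z = z) (x : E) : Antitone fun n => ‖T^[n] x - z‖ := by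
  refine antitone_nat_of_succ_le fun n => ?_
  calc ‖T^[n + 1] x - z‖ = ‖T (T^[n] x) - T z‖ := by rw [Function.iterate_succ_apply', hz]
    _ ≤ ‖T^[n] x - z‖ := hT _ _

/-- The orbit approaches the fixed point `z` ever more slowly, so Condition (S) applies to the
pair of sequences `(Tⁿ x, z)`. -/
theorem StronglyNonexpansive.tendsto_iterate_sub_iterate_succ {T : E → E}
    (hT : StronglyNonexpansive T) {z : E} (hz : T z = z) (x : E) :
    Tendsto (fun n => T^[n] x - T^[n + 1] x) atTop (𝓝 0) := by
  have hanti := hT.1.antitone_norm_iterate_sub hz x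
  have hslow : Tendsto (fun n => ‖T^[n] x - z‖ - ‖T (T^[n] x) - T z‖) atTop (𝓝 0) := by
    refine (hanti.tendsto_sub_succ_of_bddBelow ⟨0, ?_⟩).congr fun n => ?_
    · rintro _ ⟨n, rfl⟩
      exact norm_nonneg _
    · rw [hz, Function.iterate_succ_apply']
  have hS := hT.2 (fun n => T^[n] x) (fun _ => z) ⟨‖x - z‖, fun n => hanti n.zero_le⟩ hslow
  simpa only [hz, Function.iterate_succ_apply', sub_sub_sub_cancel_right] using hS

end NormedGroup

/-- Lemma 1.17: a strongly nonexpansive operator with a fixed point is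
asymptotically regular. -/
theorem stmt17
    (T : H → H) (hT : StronglyNonexpansive T) (hfix : ∃ z, T z = z) :
    ∀ x : H, Tendsto (fun n => ‖T^[n + 1] x - T^[n] x‖) atTop (𝓝 0) := by
  intro x
  obtain ⟨z, hz⟩ := hfix
  simpa only [norm_sub_rev] using
    tendsto_zero_iff_norm_tendsto_zero.mp (hT.tendsto_iterate_sub_iterate_succ hz x)
end

section
/- Let H be a real Hilbert space, let C ⊆ H be nonempty, closed and convex, and let S : C → H be a weakly regular operator with Fix(S) ≠ ∅. Let x₀ ∈ C be arbitrary and let (T_n)_{n=0}^∞ be a sequence of quasi-nonexpansive operators T_n : C → C such that Fix(S) ⊆ ∩_{n=0}^∞ Fix(T_n). If the sequence (x_n) generated by x_n = T_{n−1}(x_{n−1}) satisfies ‖S x_n − x_n‖ → 0, then (x_n) converges weakly to a point x_* ∈ Fix(S). -/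
/-!
Quasi-nonexpansiveness of the `T n` makes `‖x n - z‖` nonincreasing, hence convergent, for every
`z ∈ Fix S`. In particular `x` is bounded, so it has weakly convergent subsequences, and by weak
regularity of `S` and `‖S (x n) - x n‖ → 0` all their limits lie in `Fix S`. Two such limits `p`, `q`
coincide (Opial): `2 ⟪x n, p - q⟫ = ‖p‖² - ‖q‖² - ‖x n - p‖² + ‖x n - q‖²` converges, and its limit
is both `2 ⟪p, p - q⟫` and `2 ⟪q, p - q⟫`. So every subsequence of `x` has a further subsequence
converging weakly to the same point.
-/

open Filter Topology RealInnerProductSpace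

variable {H : Type*} [NormedAddCommGroup H] [InnerProductSpace ℝ H] [CompleteSpace H]

section

variable {E : Type*} [NormedAddCommGroup E] [InnerProductSpace ℝ E]

theorem weakConvergesTo_of_forall_subseq {x : ℕ → E} {p : E}
    (h : ∀ ns : ℕ → ℕ, Tendsto ns atTop atTop →
      ∃ ms : ℕ → ℕ, WeakConvergesTo (fun n => x (ns (ms n))) p) :
    WeakConvergesTo x p := fun y =>
  tendsto_of_subseq_tendsto fun ns hns =>
    let ⟨ms, hms⟩ := h ns hns
    ⟨ms, hms y⟩

theorem eq_of_weakConvergesTo_of_tendsto_norm_sub {x : ℕ → E} {p q : E} {a b : ℝ}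
    (ha : Tendsto (fun n => ‖x n - p‖) atTop (𝓝 a)) (hb : Tendsto (fun n => ‖x n - q‖) atTop (𝓝 b))
    {φ ψ : ℕ → ℕ} (hφ : Tendsto φ atTop atTop) (hψ : Tendsto ψ atTop atTop)
    (hp : WeakConvergesTo (fun n => x (φ n)) p) (hq : WeakConvergesTo (fun n => x (ψ n)) q) :
    p = q := by
  have hpolar : ∀ n, ⟪x n, p - q⟫ = (‖p‖ ^ 2 - ‖q‖ ^ 2 - (‖x n - p‖ ^ 2 - ‖x n - q‖ ^ 2)) / 2 := by
    intro n
    rw [inner_sub_right, norm_sub_sq_real, norm_sub_sq_real]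
    ring
  set L := (‖p‖ ^ 2 - ‖q‖ ^ 2 - (a ^ 2 - b ^ 2)) / 2
  have hL : Tendsto (fun n => ⟪x n, p - q⟫) atTop (𝓝 L) := by
    simp only [hpolar]
    exact (tendsto_const_nhds.sub ((ha.pow 2).sub (hb.pow 2))).div_const 2
  have hLp : L = ⟪p, p - q⟫ := tendsto_nhds_unique (hL.comp hφ) (hp (p - q))
  have hLq : L = ⟪q, p - q⟫ := tendsto_nhds_unique (hL.comp hψ) (hq (p - q))
  have : ⟪p - q, p - q⟫ = 0 := by rw [inner_sub_left, ← hLp, ← hLq, sub_self]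
  exact sub_eq_zero.mp (inner_self_eq_zero.mp this)

end

theorem exists_strictMono_weakConvergesTo {x : ℕ → H} {R : ℝ} (hx : ∀ n, ‖x n‖ ≤ R) :
    ∃ p φ, StrictMono φ ∧ WeakConvergesTo (fun n => x (φ n)) p := by
  -- `H` need not be separable: sequential Banach–Alaoglu is applied in the closed span `M` of
  -- the sequence, identified with its dual by Riesz, and `⟪m, y⟫ = ⟪m, P_M y⟫` for `m ∈ M`.
  set M : Submodule ℝ H := (Submodule.span ℝ (Set.range x)).topologicalClosure
  have hxM : ∀ n, x n ∈ M := fun n =>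
    Submodule.le_topologicalClosure _ (Submodule.subset_span ⟨n, rfl⟩)
  have : TopologicalSpace.SeparableSpace M :=
    (Set.countable_range x).isSeparable.span.closure.separableSpace
  have : CompleteSpace M := (Submodule.isClosed_topologicalClosure _).completeSpace_coe
  let u : ℕ → WeakDual ℝ M := fun n =>
    StrongDual.toWeakDual (InnerProductSpace.toDual ℝ M ⟨x n, hxM n⟩)
  have hu : ∀ n, u n ∈ WeakDual.toStrongDual ⁻¹' Metric.closedBall 0 R := fun n =>
    (dist_zero_right (InnerProductSpace.toDual ℝ M ⟨x n, hxM n⟩)).trans_le (by simpa using hx n)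
  obtain ⟨g, -, φ, hφ, hg⟩ := WeakDual.isSeqCompact_closedBall ℝ M 0 R hu
  refine ⟨(InnerProductSpace.toDual ℝ M).symm (WeakDual.toStrongDual g), φ, hφ, fun y => ?_⟩
  have hproj : ∀ m : M, ⟪(m : H), y⟫ = ⟪m, M.orthogonalProjectionOnto y⟫ := fun m =>
    (Submodule.inner_orthogonalProjectionOnto_eq_of_mem_left m y).symm
  simp only [fun n => hproj ⟨x (φ n), hxM (φ n)⟩, hproj, InnerProductSpace.toDual_symm_apply]
  exact ((WeakDual.eval_continuous _).tendsto g).comp hg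

theorem exists_weakConvergesTo_of_tendsto_norm_sub {F : Set H} (hF : F.Nonempty) {x : ℕ → H}
    (hdist : ∀ z ∈ F, ∃ a, Tendsto (fun n => ‖x n - z‖) atTop (𝓝 a))
    (hclust : ∀ (φ : ℕ → ℕ) (p : H), Tendsto φ atTop atTop →
      WeakConvergesTo (fun n => x (φ n)) p → p ∈ F) :
    ∃ p ∈ F, WeakConvergesTo x p := by
  obtain ⟨z, hz⟩ := hF
  obtain ⟨a, ha⟩ := hdist z hz
  obtain ⟨R, hR⟩ := ha.bddAbove_range
  have hbdd : ∀ n, ‖x n‖ ≤ R + ‖z‖ := fun n =>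
    (norm_le_norm_sub_add (x n) z).trans (add_le_add_left (hR ⟨n, rfl⟩) _)
  obtain ⟨p, φ, hφ, hp⟩ := exists_strictMono_weakConvergesTo hbdd
  have hpF := hclust φ p hφ.tendsto_atTop hp
  refine ⟨p, hpF, weakConvergesTo_of_forall_subseq fun ns hns => ?_⟩
  obtain ⟨q, ψ, hψ, hq⟩ := exists_strictMono_weakConvergesTo fun n => hbdd (ns n)
  have hnsψ := hns.comp hψ.tendsto_atTop
  have hqF := hclust _ q hnsψ hq
  obtain ⟨b, hb⟩ := hdist p hpF
  obtain ⟨c, hc⟩ := hdist q hqF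
  obtain rfl := eq_of_weakConvergesTo_of_tendsto_norm_sub hb hc hφ.tendsto_atTop hnsψ hp hq
  exact ⟨ψ, hq⟩

theorem stmt18_general
    (C : Set H)
    (S : H → H)
    (hSreg : ∀ u : ℕ → H, (∀ n, u n ∈ C) → ∀ p : H, WeakConvergesTo u p →
      Tendsto (fun n => S (u n) - u n) atTop (𝓝 (0 : H)) → p ∈ C ∧ S p = p)
    (hSfix : ∃ z ∈ C, S z = z)
    (T : ℕ → H → H) (hmaps : ∀ n : ℕ, Set.MapsTo (T n) C C)
    (hqne : ∀ n : ℕ, (∃ z ∈ C, T n z = z) ∧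
      ∀ x ∈ C, ∀ z ∈ C, T n z = z → ‖T n x - z‖ ≤ ‖x - z‖)
    (hsub : {z : H | z ∈ C ∧ S z = z} ⊆ ⋂ n : ℕ, {z : H | z ∈ C ∧ T n z = z})
    (x : ℕ → H) (hx0 : x 0 ∈ C) (hx : ∀ n, x (n + 1) = T n (x n))
    (hnorm : Tendsto (fun n => ‖S (x n) - x n‖) atTop (𝓝 0)) :
    ∃ p, (p ∈ C ∧ S p = p) ∧ WeakConvergesTo x p := by
  have hxC : ∀ n, x n ∈ C := by
    intro n
    induction n with
    | zero => exact hx0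
    | succ n ih => rw [hx]; exact hmaps n ih
  have hfejer : ∀ z ∈ {z | z ∈ C ∧ S z = z}, Antitone fun n => ‖x n - z‖ := by
    intro z hz
    refine antitone_nat_of_succ_le fun n => ?_
    obtain ⟨hzC, hzT⟩ := Set.mem_iInter.mp (hsub hz) n
    rw [hx n]
    exact (hqne n).2 (x n) (hxC n) z hzC hzT
  have hdist : ∀ z ∈ {z | z ∈ C ∧ S z = z}, ∃ a, Tendsto (fun n => ‖x n - z‖) atTop (𝓝 a) :=
    fun z hz => ⟨_, tendsto_atTop_ciInf (hfejer z hz) ⟨0, fun _ ⟨_, h⟩ => h ▸ norm_nonneg _⟩⟩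
  exact exists_weakConvergesTo_of_tendsto_norm_sub hSfix hdist fun φ p hφ hp =>
    hSreg _ (fun n => hxC (φ n)) p hp (tendsto_zero_iff_norm_tendsto_zero.mpr (hnorm.comp hφ))

/-- Theorem 1.20, generalized Opial theorem. -/
theorem stmt18
    (C : Set H) (hne : C.Nonempty) (hcl : IsClosed C) (hconv : Convex ℝ C)
    (S : H → H)
    (hSreg : ∀ u : ℕ → H, (∀ n, u n ∈ C) → ∀ p : H, WeakConvergesTo u p →
      Tendsto (fun n => S (u n) - u n) atTop (𝓝 (0 : H)) → p ∈ C ∧ S p = p)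
    (hSfix : ∃ z ∈ C, S z = z)
    (T : ℕ → H → H) (hmaps : ∀ n : ℕ, Set.MapsTo (T n) C C)
    (hqne : ∀ n : ℕ, (∃ z ∈ C, T n z = z) ∧
      ∀ x ∈ C, ∀ z ∈ C, T n z = z → ‖T n x - z‖ ≤ ‖x - z‖)
    (hsub : {z : H | z ∈ C ∧ S z = z} ⊆ ⋂ n : ℕ, {z : H | z ∈ C ∧ T n z = z})
    (x : ℕ → H) (hx0 : x 0 ∈ C) (hx : ∀ n, x (n + 1) = T n (x n))
    (hnorm : Tendsto (fun n => ‖S (x n) - x n‖) atTop (𝓝 0)) :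
    ∃ p, (p ∈ C ∧ S p = p) ∧ WeakConvergesTo x p :=
  stmt18_general C S hSreg hSfix T hmaps hqne hsub x hx0 hx hnorm
end
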